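/- For any vertex v_i of a simple digraph G with adjacency matrix A, the inner vertex energy satisfies E^-(v_i) ≤ √(d^-(v_i)), where d^-(v_i) is the in-degree of v_i. -/

import Mathlib

open Matrix Finset

noncomputable section

/-- For a real matrix, `A * Aᵀ` is positive semidefinite. -/
theorem mulTranspose_posSemidef {m k : Type*} [Fintype m] [Fintype k] (A : Matrix m k ℝ) :
    (A * Aᵀ).PosSemidef := by
  have h := Matrix.posSemidef_self_mul_conjTranspose A
  rwa [Matrix.conjTranspose_eq_transpose_of_trivial] at h

/-- For a real matrix, `Aᵀ * A` is positive semidefinite. -/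
theorem transposeMul_posSemidef {m k : Type*} [Fintype m] [Fintype k] (A : Matrix m k ℝ) :
    (Aᵀ * A).PosSemidef := by
  simpa using mulTranspose_posSemidef Aᵀ

/-- The positive semidefinite square root of a positive semidefinite matrix
(the definition Mathlib had as `Matrix.PosSemidef.sqrt`, since removed). -/
noncomputable def Matrix.PosSemidef.sqrt {n : Type*} [Fintype n] [DecidableEq n] {𝕜 : Type*}
    [RCLike 𝕜] [PartialOrder 𝕜] {A : Matrix n n 𝕜} (hA : A.PosSemidef) : Matrix n n 𝕜 :=
  hA.1.eigenvectorUnitary.1 * diagonal ((↑) ∘ (√·) ∘ hA.1.eigenvalues) *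
  (star hA.1.eigenvectorUnitary : Matrix n n 𝕜)

/-- `|A|⁺ = (A Aᵀ)^{1/2}` (psd square root). -/
def absPlus {V : Type*} [Fintype V] [DecidableEq V] (A : Matrix V V ℝ) : Matrix V V ℝ :=
  (mulTranspose_posSemidef A).sqrt

/-- `|A|⁻ = (Aᵀ A)^{1/2}` (psd square root). -/
def absMinus {V : Type*} [Fintype V] [DecidableEq V] (A : Matrix V V ℝ) : Matrix V V ℝ :=
  (transposeMul_posSemidef A).sqrt

/-- The (Nikiforov) energy: `Tr((A Aᵀ)^{1/2})`, the sum of the singular values of `A`. -/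
def energy {V : Type*} [Fintype V] [DecidableEq V] (A : Matrix V V ℝ) : ℝ := (absPlus A).trace

/-- 0-1 adjacency matrix of the digraph with edge relation `E`. -/
def adjMat {V : Type*} [Fintype V] [DecidableEq V] (E : V → V → Prop) [DecidableRel E] :
    Matrix V V ℝ := Matrix.of fun i j => if E i j then 1 else 0

/-- Out-degree `d⁺(v)`. -/
def outDeg {V : Type*} [Fintype V] (E : V → V → Prop) [DecidableRel E] (v : V) : ℕ :=
  (univ.filter (fun w => E v w)).card

/-- In-degree `d⁻(w)`. -/
def inDeg {V : Type*} [Fintype V] (E : V → V → Prop) [DecidableRel E] (w : V) : ℕ :=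
  (univ.filter (fun v => E v w)).card

/-- Directed Randic index `R(G) = (1/2) Σ_{(v,w)∈E} 1/√(d⁺(v) d⁻(w))`. -/
def randic {V : Type*} [Fintype V] (E : V → V → Prop) [DecidableRel E] : ℝ :=
  (1/2) * ∑ v, ∑ w, if E v w then 1 / Real.sqrt (outDeg E v * inDeg E w) else 0

/-- Number of arcs of the digraph. -/
def numArcs {V : Type*} [Fintype V] (E : V → V → Prop) [DecidableRel E] : ℕ :=
  (univ.filter (fun p : V × V => E p.1 p.2)).card

/-- Maximum over vertices of in- and out-degrees, `Δ(G)`. -/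
def maxDeg {V : Type*} [Fintype V] (E : V → V → Prop) [DecidableRel E] : ℕ :=
  univ.sup (fun v => max (outDeg E v) (inDeg E v))


theorem psd_sqrt_posSemidef {n : ℕ} (M : Matrix (Fin n) (Fin n) ℝ) (hM : M.PosSemidef) :
    hM.sqrt.PosSemidef := by
  unfold Matrix.PosSemidef.sqrt
  have := (PosSemidef.diagonal (d := (RCLike.ofReal ∘ (√·) ∘ hM.1.eigenvalues : Fin n → ℝ))
    (fun j => by simp [Real.sqrt_nonneg])).mul_mul_conjTranspose_same hM.1.eigenvectorUnitary.1
  rw [star_eq_conjTranspose]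
  exact this

theorem psd_sqrt_mul_self {n : ℕ} (M : Matrix (Fin n) (Fin n) ℝ) (hM : M.PosSemidef) :
    hM.sqrt * hM.sqrt = M := by
  unfold Matrix.PosSemidef.sqrt
  conv_rhs => rw [hM.1.spectral_theorem, Unitary.conjStarAlgAut_apply]
  have hU : star (hM.1.eigenvectorUnitary : Matrix _ _ ℝ) * hM.1.eigenvectorUnitary.1 = 1 :=
    Unitary.star_mul_self_of_mem hM.1.eigenvectorUnitary.2
  have hU' : ∀ X : Matrix (Fin n) (Fin n) ℝ,
      star (hM.1.eigenvectorUnitary : Matrix _ _ ℝ) * (hM.1.eigenvectorUnitary.1 * X) = X := by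
    intro X; rw [← Matrix.mul_assoc, hU, Matrix.one_mul]
  simp only [Matrix.mul_assoc, hU']
  simp only [← Matrix.mul_assoc (diagonal _), diagonal_mul_diagonal]
  congr 3
  funext j
  simp [Real.mul_self_sqrt (hM.eigenvalues_nonneg j)]

theorem sqrt_diag_le {n : ℕ} (M : Matrix (Fin n) (Fin n) ℝ) (hM : M.PosSemidef) (i : Fin n) :
    hM.sqrt i i ≤ Real.sqrt (M i i) := by
  set S := hM.sqrt with hS
  have hSp : S.PosSemidef := psd_sqrt_posSemidef M hM
  have hdiag : 0 ≤ S i i := by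
    exact hSp.diag_nonneg
  have hsym : Sᵀ = S := by
    have := hSp.1
    simpa [IsHermitian, conjTranspose_eq_transpose_of_trivial] using this
  have hsq : (S * S) i i = ∑ j, S i j ^ 2 := by
    have hji : ∀ a b, S a b = S b a := fun a b => by rw [← Matrix.transpose_apply S b a, hsym]
    simp only [Matrix.mul_apply, sq]
    exact Finset.sum_congr rfl fun j _ => by rw [hji j i]
  have h1 : S i i ^ 2 ≤ M i i := by
    rw [← psd_sqrt_mul_self M hM, hsq]
    exact Finset.single_le_sum (f := fun j => S i j ^ 2) (fun j _ => sq_nonneg _) (mem_univ i)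
  calc S i i = Real.sqrt (S i i ^ 2) := by rw [Real.sqrt_sq hdiag]
    _ ≤ Real.sqrt (M i i) := Real.sqrt_le_sqrt h1

/-- For any vertex of a simple digraph, `E⁻(v) ≤ √(d⁻(v))`. -/
theorem stmt_6 {n : ℕ} (E : Fin n → Fin n → Prop) [DecidableRel E]
    (hloop : ∀ v, ¬ E v v) (i : Fin n) :
    (absMinus (adjMat E)) i i ≤ Real.sqrt (inDeg E i) := by
  have key := sqrt_diag_le ((adjMat E)ᵀ * adjMat E) (transposeMul_posSemidef (adjMat E)) i
  have hdeg : ((adjMat E)ᵀ * adjMat E) i i = (inDeg E i : ℝ) := by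
    simp only [Matrix.mul_apply, Matrix.transpose_apply, adjMat, Matrix.of_apply, inDeg]
    rw [Finset.card_filter]
    push_cast
    exact Finset.sum_congr rfl fun j _ => by by_cases h : E j i <;> simp [h]
  rw [hdeg] at key
  exact key
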